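/- arXiv:2108.04003 — 3 statements merged into one kernel-verified Lean document; each statement's English description precedes it below -/
import Mathlib

section
/- Let β ∈ ℝ and ρ⁺, ρ⁻ > 0, and let X⁺ and X⁻ be independent Poisson random variables with means ρ⁺ and ρ⁻ respectively. Setting ρ = ρ⁺ + ρ⁻ and m = ρ⁺ − ρ⁻, the expectation E[X⁻·e^{β(X⁺−X⁻)} − X⁺·e^{−β(X⁺−X⁻)}] is finite and equals e^{−β + ρ·cosh(β) − ρ}·(ρ·sinh(m·sinh β) − m·cosh(m·sinh β)). -/
/-!
With `w(n) = ρⁿ e^{-ρ} / n!` the Poisson weights, the exponential moments are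
`∑ₙ w(n) e^{tn} = exp(ρ(eᵗ - 1))` and `∑ₙ n w(n) e^{tn} = ρ eᵗ exp(ρ(eᵗ - 1))`.
Since `e^{±β(i - j)} = e^{±βi} e^{∓βj}`, the double series is a difference of two absolutely
convergent products of such moments. Writing `u = m sinh β`, the result is
`e^{-β + ρ cosh β - ρ} (ρ⁻ eᵘ - ρ⁺ e^{-u})`, and `ρ⁻ eᵘ - ρ⁺ e^{-u} = ρ sinh u - m cosh u`.
-/

open Real Nat

theorem HasSum.mul_of_real {ι κ : Type*} {f : ι → ℝ} {g : κ → ℝ} {a b : ℝ}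
    (hf : HasSum f a) (hg : HasSum g b) :
    HasSum (fun x : ι × κ => f x.1 * g x.2) (a * b) :=
  hf.mul hg (summable_mul_of_summable_norm (summable_norm_iff.2 hf.summable)
    (summable_norm_iff.2 hg.summable))

noncomputable def poissonExpWeight (ρ t : ℝ) (n : ℕ) : ℝ :=
  ρ ^ n / n ! * exp (-ρ) * exp (t * n)

theorem hasSum_poissonExpWeight (ρ t : ℝ) :
    HasSum (poissonExpWeight ρ t) (exp (ρ * (exp t - 1))) := by
  have hweight : poissonExpWeight ρ t = fun n => (ρ * exp t) ^ n / n ! * exp (-ρ) := by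
    funext n
    rw [poissonExpWeight, mul_pow, ← exp_nat_mul]
    ring_nf
  have h := (NormedSpace.expSeries_div_hasSum_exp (ρ * exp t)).mul_right (exp (-ρ))
  rwa [← exp_eq_exp_ℝ, ← exp_add, show ρ * exp t + -ρ = ρ * (exp t - 1) by ring, ← hweight] at h

theorem cast_succ_mul_poissonExpWeight_succ (ρ t : ℝ) (n : ℕ) :
    ((n + 1 : ℕ) : ℝ) * poissonExpWeight ρ t (n + 1) = ρ * exp t * poissonExpWeight ρ t n := by
  simp only [poissonExpWeight, factorial_succ, pow_succ, cast_mul, cast_succ, mul_add_one t,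
    exp_add]
  have hn : (n + 1 : ℝ) ≠ 0 := by positivity
  field_simp

theorem hasSum_nat_mul_poissonExpWeight (ρ t : ℝ) :
    HasSum (fun n : ℕ => n * poissonExpWeight ρ t n) (ρ * exp t * exp (ρ * (exp t - 1))) := by
  have hshift : HasSum (fun n : ℕ => ((n + 1 : ℕ) : ℝ) * poissonExpWeight ρ t (n + 1))
      (ρ * exp t * exp (ρ * (exp t - 1))) := by
    simp only [cast_succ_mul_poissonExpWeight_succ]
    exact (hasSum_poissonExpWeight ρ t).mul_left (ρ * exp t)
  simpa only [cast_zero, zero_mul, zero_add] using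
    HasSum.zero_add (f := fun n : ℕ => (n : ℝ) * poissonExpWeight ρ t n) hshift

theorem reaction_summand_eq (β ρp ρm : ℝ) (i j : ℕ) :
    (ρp ^ i / (i ! : ℝ) * exp (-ρp)) * (ρm ^ j / (j ! : ℝ) * exp (-ρm)) *
        ((j : ℝ) * exp (β * ((i : ℝ) - (j : ℝ))) - (i : ℝ) * exp (-β * ((i : ℝ) - (j : ℝ)))) =
      poissonExpWeight ρp β i * (j * poissonExpWeight ρm (-β) j) -
        i * poissonExpWeight ρp (-β) i * poissonExpWeight ρm β j := by
  rw [show β * ((i : ℝ) - j) = β * i + -β * j by ring,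
    show -β * ((i : ℝ) - j) = -β * i + β * j by ring, exp_add, exp_add]
  simp only [poissonExpWeight]
  ring

theorem reaction_closed_form (β ρp ρm : ℝ) :
    exp (ρp * (exp β - 1)) * (ρm * exp (-β) * exp (ρm * (exp (-β) - 1))) -
        ρp * exp (-β) * exp (ρp * (exp (-β) - 1)) * exp (ρm * (exp β - 1)) =
      exp (-β + (ρp + ρm) * cosh β - (ρp + ρm)) *
        ((ρp + ρm) * sinh ((ρp - ρm) * sinh β) - (ρp - ρm) * cosh ((ρp - ρm) * sinh β)) := by
  set c := -β + (ρp + ρm) * cosh β - (ρp + ρm) with hc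
  set u := (ρp - ρm) * sinh β with hu
  have hplus : c + u = ρp * (exp β - 1) + ρm * (exp (-β) - 1) + -β := by
    rw [hc, hu, cosh_eq, sinh_eq]; ring
  have hminus : c + -u = ρp * (exp (-β) - 1) + ρm * (exp β - 1) + -β := by
    rw [hc, hu, cosh_eq, sinh_eq]; ring
  calc _ = ρm * exp (c + u) - ρp * exp (c + -u) := by
          rw [hplus, hminus, exp_add, exp_add, exp_add, exp_add]; ring
    _ = _ := by rw [sinh_eq, cosh_eq, exp_add, exp_add]; ring

theorem poisson_reaction_term_general (β ρp ρm : ℝ) :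
    (Summable fun q : ℕ × ℕ =>
      (ρp ^ q.1 / (q.1.factorial : ℝ) * Real.exp (-ρp)) *
        (ρm ^ q.2 / (q.2.factorial : ℝ) * Real.exp (-ρm)) *
        ((q.2 : ℝ) * Real.exp (β * ((q.1 : ℝ) - (q.2 : ℝ))) -
          (q.1 : ℝ) * Real.exp (-β * ((q.1 : ℝ) - (q.2 : ℝ))))) ∧
    (∑' q : ℕ × ℕ,
      (ρp ^ q.1 / (q.1.factorial : ℝ) * Real.exp (-ρp)) *
        (ρm ^ q.2 / (q.2.factorial : ℝ) * Real.exp (-ρm)) *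
        ((q.2 : ℝ) * Real.exp (β * ((q.1 : ℝ) - (q.2 : ℝ))) -
          (q.1 : ℝ) * Real.exp (-β * ((q.1 : ℝ) - (q.2 : ℝ))))) =
      Real.exp (-β + (ρp + ρm) * Real.cosh β - (ρp + ρm)) *
        ((ρp + ρm) * Real.sinh ((ρp - ρm) * Real.sinh β) -
          (ρp - ρm) * Real.cosh ((ρp - ρm) * Real.sinh β)) := by
  have h := ((hasSum_poissonExpWeight ρp β).mul_of_real
      (hasSum_nat_mul_poissonExpWeight ρm (-β))).sub
    ((hasSum_nat_mul_poissonExpWeight ρp (-β)).mul_of_real (hasSum_poissonExpWeight ρm β))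
  simp only [← reaction_summand_eq, reaction_closed_form] at h
  exact ⟨h.summable, h.tsum_eq⟩

/-- For independent Poisson random variables `X⁺, X⁻` with means
`ρ⁺, ρ⁻ > 0`, setting `ρ = ρ⁺ + ρ⁻` and `m = ρ⁺ − ρ⁻`, the expectation
`E[X⁻·e^{β(X⁺−X⁻)} − X⁺·e^{−β(X⁺−X⁻)}]` is finite (the series is summable) and
equals `e^{−β + ρ·cosh β − ρ}·(ρ·sinh(m·sinh β) − m·cosh(m·sinh β))`. -/
theorem poisson_reaction_term (β ρp ρm : ℝ) (hp : 0 < ρp) (hm : 0 < ρm) :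
    (Summable fun q : ℕ × ℕ =>
      (ρp ^ q.1 / (q.1.factorial : ℝ) * Real.exp (-ρp)) *
        (ρm ^ q.2 / (q.2.factorial : ℝ) * Real.exp (-ρm)) *
        ((q.2 : ℝ) * Real.exp (β * ((q.1 : ℝ) - (q.2 : ℝ))) -
          (q.1 : ℝ) * Real.exp (-β * ((q.1 : ℝ) - (q.2 : ℝ))))) ∧
    (∑' q : ℕ × ℕ,
      (ρp ^ q.1 / (q.1.factorial : ℝ) * Real.exp (-ρp)) *
        (ρm ^ q.2 / (q.2.factorial : ℝ) * Real.exp (-ρm)) *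
        ((q.2 : ℝ) * Real.exp (β * ((q.1 : ℝ) - (q.2 : ℝ))) -
          (q.1 : ℝ) * Real.exp (-β * ((q.1 : ℝ) - (q.2 : ℝ))))) =
      Real.exp (-β + (ρp + ρm) * Real.cosh β - (ρp + ρm)) *
        ((ρp + ρm) * Real.sinh ((ρp - ρm) * Real.sinh β) -
          (ρp - ρm) * Real.cosh ((ρp - ρm) * Real.sinh β)) :=
  poisson_reaction_term_general β ρp ρm
end

section
/- Let χ = {0, +1, −1}, and for a ∈ χ set σ⁺(a) = 1 if a = +1 and 0 otherwise, and σ(a) = 1 if a ≠ 0 and 0 otherwise. For a configuration η : ℤ² → χ, define the symmetric current of + particles across the edge (0, e₁) by j(η) = σ⁺(η(0))·(1 − σ(η(e₁))) − σ⁺(η(e₁))·(1 − σ(η(0))), where e₁ = (1,0). Then there exist no k ∈ ℕ and no function g : ({−k,…,k}² → χ) → ℝ such that for every configuration η : ℤ² → χ one has j(η) = g(η restricted to {−k,…,k}²) − g((τ_{e₁}η) restricted to {−k,…,k}²), where (τ_{e₁}η)(y) = η(y + e₁). In other words, the symmetric + current of the active exclusion process is not a discrete gradient of any local function. -/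
/-- The single-site state space `χ = {0, +1, −1}` of the active exclusion process. -/
inductive Chi : Type
  | zero : Chi
  | plus : Chi
  | minus : Chi
  deriving DecidableEq

/-- `σ⁺(a) = 1` if `a = +1`, and `0` otherwise. -/
def sigmaPlus : Chi → ℝ := fun a => if a = Chi.plus then 1 else 0

/-- `σ(a) = 1` if `a ≠ 0`, and `0` otherwise. -/
def sigmaTot : Chi → ℝ := fun a => if a = Chi.zero then 0 else 1

/-- The symmetric current of `+` particles across the edge `(0, e₁)`:
`j(η) = σ⁺(η(0))·(1 − σ(η(e₁))) − σ⁺(η(e₁))·(1 − σ(η(0)))`. -/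
def symCurrent (η : ℤ × ℤ → Chi) : ℝ :=
  sigmaPlus (η (0, 0)) * (1 - sigmaTot (η (1, 0))) -
    sigmaPlus (η (1, 0)) * (1 - sigmaTot (η (0, 0)))

/-!
Along a periodic orbit of a map `T`, a coboundary `φ - φ ∘ T` sums to zero. The configuration
`… + 0 − + 0 − …`, constant in the second coordinate, is `3`-periodic under the shift by `e₁`,
and along its orbit the symmetric `+` current is `1, 0, 0`: a `+` facing a hole carries current,
while `0 −` carries none and `− +` is blocked by exclusion. So the current is not a coboundary
for the shift, let alone the gradient of a local function.
-/

open Function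

section Coboundary

variable {α G : Type*} [AddCommGroup G] {f : α → α} {g φ : α → G}

theorem birkhoffSum_eq_sub_of_eq_sub_comp (h : ∀ x, g x = φ x - φ (f x)) (n : ℕ) (x : α) :
    birkhoffSum f g n x = φ x - φ (f^[n] x) := by
  simp only [birkhoffSum, h, ← iterate_succ_apply' f]
  exact Finset.sum_range_sub' (fun k => φ (f^[k] x)) n

theorem Function.IsPeriodicPt.birkhoffSum_eq_zero_of_eq_sub_comp
    (h : ∀ x, g x = φ x - φ (f x)) {n : ℕ} {x : α} (hx : IsPeriodicPt f n x) :
    birkhoffSum f g n x = 0 := by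
  rw [birkhoffSum_eq_sub_of_eq_sub_comp h, hx.eq, sub_self]

end Coboundary

def shiftE1 (η : ℤ × ℤ → Chi) : ℤ × ℤ → Chi := fun y => η (y + (1, 0))

def plusZeroMinusStripes (p : ℤ × ℤ) : Chi :=
  if p.1 % 3 = 0 then Chi.plus else if p.1 % 3 = 1 then Chi.zero else Chi.minus

theorem isPeriodicPt_shiftE1_plusZeroMinusStripes :
    IsPeriodicPt shiftE1 3 plusZeroMinusStripes := by
  funext p
  have hmod : (p.1 + 1 + 1 + 1) % 3 = p.1 % 3 := by omega
  simp only [iterate_succ_apply', iterate_zero_apply, shiftE1, plusZeroMinusStripes,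
    Prod.fst_add, hmod]

theorem birkhoffSum_symCurrent_plusZeroMinusStripes :
    birkhoffSum shiftE1 symCurrent 3 plusZeroMinusStripes = 1 := by
  simp [birkhoffSum, Finset.sum_range_succ, shiftE1, plusZeroMinusStripes, symCurrent, sigmaPlus,
    sigmaTot]

/-- The symmetric `+` current of the two-dimensional active exclusion
process is not a discrete gradient of any local function: there exist no `k ∈ ℕ`
and no function `g` of the restriction of configurations to the window
`{−k,…,k}²` such that for every configuration `η : ℤ² → χ`,
`j(η) = g(η|window) − g((τ_{e₁}η)|window)`, where `(τ_{e₁}η)(y) = η(y + e₁)`. -/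
theorem active_exclusion_nongradient :
    ¬ ∃ (k : ℕ) (g : ({y : ℤ × ℤ // |y.1| ≤ (k : ℤ) ∧ |y.2| ≤ (k : ℤ)} → Chi) → ℝ),
      ∀ η : ℤ × ℤ → Chi,
        symCurrent η =
          g (fun y => η y.val) - g (fun y => η (y.val + ((1 : ℤ), (0 : ℤ)))) := by
  rintro ⟨k, g, hg⟩
  have hzero := isPeriodicPt_shiftE1_plusZeroMinusStripes.birkhoffSum_eq_zero_of_eq_sub_comp
    (φ := fun η => g (fun y => η y.val)) hg
  rw [birkhoffSum_symCurrent_plusZeroMinusStripes] at hzero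
  exact one_ne_zero hzero
end

section
/- Let β > 0 and ρ > 0, and set s = sinh β. Consider the equation m·cosh(s·m) = ρ·sinh(s·m) (equivalently, m = ρ·tanh(s·m)) for m ∈ ℝ. Then: (i) if ρ·sinh β > 1, there exists m₀ with 0 < m₀ < ρ satisfying m₀ = ρ·tanh(s·m₀); (ii) if ρ·sinh β ≤ 1, then m = 0 is the only nonnegative solution, i.e. no m > 0 satisfies m = ρ·tanh(s·m). -/
/-!
For `m > 0` the curve `ρ * tanh (s * m)` lies strictly below the line `ρ * s * m`, so when
`ρ * s ≤ 1` it never meets the diagonal. When `ρ * s > 1`, the bound `tanh x ≥ x / (1 + x)` puts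
the curve on or above the diagonal at `m = ρ - 1 / s`, while `tanh < 1` puts it below at `m = ρ`;
the intermediate value theorem yields a fixed point in between.
-/

open Real Set

namespace Real

@[fun_prop]
theorem continuous_tanh : Continuous tanh := by
  simp_rw [funext tanh_eq_sinh_div_cosh]
  exact continuous_sinh.div continuous_cosh fun x => (cosh_pos x).ne'

/-- Equivalent to `1 + 2x ≤ exp (2x)`. -/
theorem div_one_add_le_tanh {x : ℝ} (hx : 0 ≤ x) : x / (1 + x) ≤ tanh x := by
  have hexp : exp x * exp (-x) = 1 := by rw [← exp_add, add_neg_cancel, exp_zero]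
  have htwo : 2 * x + 1 ≤ exp x * exp x := by rw [← exp_add, ← two_mul]; exact add_one_le_exp _
  rw [tanh_eq, div_le_div_iff₀ (by linarith) (by positivity)]
  nlinarith [exp_pos x, exp_pos (-x)]

/-- By the mean value theorem, `sinh x = x * cosh c` for some `0 < c < x`. -/
theorem sinh_lt_mul_cosh {x : ℝ} (hx : 0 < x) : sinh x < x * cosh x := by
  obtain ⟨c, ⟨hc0, hcx⟩, hc⟩ := exists_hasDerivAt_eq_slope sinh cosh hx
    continuous_sinh.continuousOn fun y _ => hasDerivAt_sinh y
  rw [sinh_zero, sub_zero, sub_zero, eq_div_iff hx.ne'] at hc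
  rw [← hc, mul_comm]
  gcongr
  rwa [cosh_lt_cosh, abs_of_pos hc0, abs_of_pos hx]

theorem tanh_lt_self {x : ℝ} (hx : 0 < x) : tanh x < x := by
  rw [tanh_eq_sinh_div_cosh, div_lt_iff₀ (cosh_pos x)]
  exact sinh_lt_mul_cosh hx

end Real

theorem exists_pos_eq_mul_tanh_mul {ρ s : ℝ} (hs : 0 < s) (hρs : 1 < ρ * s) :
    ∃ m, 0 < m ∧ m < ρ ∧ m = ρ * tanh (s * m) := by
  have hρ : 0 < ρ := pos_of_mul_pos_left (one_pos.trans hρs) hs.le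
  set m₁ := ρ - 1 / s
  have hm₁ : 0 < m₁ := by
    rw [sub_pos, div_lt_iff₀ hs]; exact hρs
  have hsm₁ : 1 + s * m₁ = ρ * s := by rw [mul_sub, mul_one_div_cancel hs.ne']; ring
  have hlow : m₁ ≤ ρ * tanh (s * m₁) := by
    have := div_one_add_le_tanh (mul_pos hs hm₁).le
    rw [hsm₁] at this
    calc m₁ = ρ * (s * m₁ / (ρ * s)) := by field_simp
      _ ≤ ρ * tanh (s * m₁) := by gcongr
  have hhigh : ρ * tanh (s * ρ) < ρ := mul_lt_of_lt_one_right hρ (tanh_lt_one _)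
  have hcont : ContinuousOn (fun m => m - ρ * tanh (s * m)) (Icc m₁ ρ) :=
    Continuous.continuousOn (by fun_prop)
  obtain ⟨m, ⟨hm₁m, hmρ⟩, hm⟩ :=
    intermediate_value_Ico (sub_le_self ρ (by positivity)) hcont
      ⟨sub_nonpos.mpr hlow, sub_pos.mpr hhigh⟩
  exact ⟨m, hm₁.trans_le hm₁m, hmρ, sub_eq_zero.mp hm⟩

theorem mul_tanh_mul_lt_self {ρ s m : ℝ} (hρ : 0 < ρ) (hs : 0 < s) (hρs : ρ * s ≤ 1)
    (hm : 0 < m) : ρ * tanh (s * m) < m :=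
  calc ρ * tanh (s * m) < ρ * (s * m) := by gcongr; exact tanh_lt_self (mul_pos hs hm)
    _ = ρ * s * m := by ring
    _ ≤ m := mul_le_of_le_one_left hm.le hρs

/-- For `β > 0`, `ρ > 0` and `s = sinh β`, consider the equation
`m = ρ·tanh(s·m)` (equivalently `m·cosh(s·m) = ρ·sinh(s·m)`).
(i) If `ρ·sinh β > 1`, there exists `m₀` with `0 < m₀ < ρ` satisfying
`m₀ = ρ·tanh(s·m₀)`.
(ii) If `ρ·sinh β ≤ 1`, then `m = 0` is the only nonnegative solution: no `m > 0`
satisfies `m = ρ·tanh(s·m)`. -/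
theorem magnetization_phase_transition (β ρ : ℝ) (hβ : 0 < β) (hρ : 0 < ρ) :
    (1 < ρ * Real.sinh β →
      ∃ m₀ : ℝ, 0 < m₀ ∧ m₀ < ρ ∧ m₀ = ρ * Real.tanh (Real.sinh β * m₀)) ∧
    (ρ * Real.sinh β ≤ 1 →
      ∀ m : ℝ, 0 < m → m ≠ ρ * Real.tanh (Real.sinh β * m)) := by
  have hs : 0 < sinh β := sinh_pos_iff.mpr hβ
  exact ⟨exists_pos_eq_mul_tanh_mul hs, fun h m hm => (mul_tanh_mul_lt_self hρ hs h hm).ne'⟩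
end
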